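/- Let A, B be n×n positive semidefinite Hermitian matrices with eigenvalues λ₁(·) ≥ ⋯ ≥ λ_n(·). If the eigenvalue vector of A is weakly majorized by a convex combination (or integral average) ∫ λ⃗(D_τ) dν(τ) of eigenvalue vectors of a measurable family of Hermitian matrices D_τ, and f : ℝ → [0,∞) is non-decreasing and convex, then for every unitarily invariant norm ‖·‖_ρ, ‖f(A)‖_ρ ≤ ∫ ‖f(D_τ)‖_ρ dν(τ). Conversely, if this norm inequality holds for all unitarily invariant norms and the function f(x) = max{x + c, 0} for all large c > 0, then λ⃗(A) ≺_w ∫ λ⃗(D_τ) dν(τ). -/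

import Mathlib

/-!
Write `a = λ⃗(A)` and `m = ∫ λ⃗(D_τ) dν`. For the forward direction, Hahn–Banach gives a norming
functional for the nonnegative antitone vector `f ∘ a` whose weights `z` may be taken nonnegative
and antitone, with `∑ z_i |v_i| ≤ ρ v` for every `v`. Abel summation against the tangent-line
inequality of `f` (its right-derivative slopes at `a_i` are nonnegative and antitone) turns
`a ≺_w m` into `∑ z_i f(a_i) ≤ ∑ z_i f(m_i)`; Jensen's inequality for `f` bounds this by
`∫ ∑ z_i f(λ_i(D_τ)) dν ≤ ∫ ρ(f(λ⃗(D_τ))) dν`.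

For the converse, test the hypothesis on the Ky Fan `k`-norm, which on nonnegative antitone vectors
is the sum of the first `k` entries: `∑_{j<k} (a_j + c) ≤ ∑_{j<k} ∫ max(λ_j(D_τ) + c, 0) dν`.
Since `max(t + c, 0) = max(t, -c) + c` and `∫ max(λ_j(D_τ), -c) dν → m_j` as `c → ∞` by dominated
convergence, the prefix sums of `a` are bounded by those of `m`.
-/

open MeasureTheory

/-- Sorted (descending) eigenvalues of a Hermitian matrix. -/
noncomputable def eigsDesc {n : ℕ} {A : Matrix (Fin n) (Fin n) ℂ} (hA : A.IsHermitian) :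
    Fin n → ℝ :=
  fun j => hA.eigenvalues (Tuple.sort hA.eigenvalues j.rev)

/-- A symmetric gauge function on `ℝ^r`: nonnegative, absolutely homogeneous,
subadditive, permutation invariant, and absolute. Symmetric gauge functions
correspond bijectively to unitarily invariant norms `‖H‖_ρ = ρ(λ⃗(|H|))`. -/
def IsSymmetricGauge {r : ℕ} (ρ : (Fin r → ℝ) → ℝ) : Prop :=
  (∀ v, 0 ≤ ρ v) ∧ (∀ (c : ℝ) v, ρ (c • v) = |c| * ρ v) ∧
  (∀ v w, ρ (v + w) ≤ ρ v + ρ w) ∧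
  (∀ (σ : Equiv.Perm (Fin r)) v, ρ (v ∘ σ) = ρ v) ∧
  (∀ v, ρ (fun i => |v i|) = ρ v)

open Filter Topology Set

-- for antitone `x` and `y` this is weak majorization `x ≺_w y`
def PrefixSumsLE {n : ℕ} (x y : Fin n → ℝ) : Prop :=
  ∀ k (hk : k ≤ n), ∑ j : Fin k, x (Fin.castLE hk j) ≤ ∑ j : Fin k, y (Fin.castLE hk j)

theorem PrefixSumsLE.sum_mul_le {n : ℕ} {x y z : Fin n → ℝ} (h : PrefixSumsLE x y)
    (hz : Antitone z) (hz0 : ∀ i, 0 ≤ z i) : ∑ i, z i * x i ≤ ∑ i, z i * y i := by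
  induction n with
  | zero => simp
  | succ n ih =>
    -- Abel summation: peel off `z (last n)` times the full sum
    have split : ∀ v : Fin (n + 1) → ℝ, ∑ i, z i * v i =
        ∑ i : Fin n, (z i.castSucc - z (Fin.last n)) * v i.castSucc +
          z (Fin.last n) * ∑ i, v i := by
      intro v
      simp only [Fin.sum_univ_castSucc, sub_mul, Finset.sum_sub_distrib, mul_add, Finset.mul_sum]
      ring
    rw [split x, split y]
    gcongr ?_ + z (Fin.last n) * ?_
    · refine ih (fun k hk => ?_) (fun i j hij => ?_) (fun i => ?_)
      · simpa using h k (hk.trans n.le_succ)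
      · simpa using hz (Fin.castSucc_le_castSucc_iff.mpr hij)
      · simpa using hz (Fin.le_last i.castSucc)
    · exact hz0 _
    · simpa using h (n + 1) le_rfl

theorem ConvexOn.add_rightDeriv_mul_sub_le {f : ℝ → ℝ} (hf : ConvexOn ℝ univ f) (x t : ℝ) :
    f x + derivWithin f (Ioi x) x * (t - x) ≤ f t := by
  rcases lt_trichotomy t x with htx | rfl | hxt
  · have hslope : slope f t x ≤ derivWithin f (Ioi x) x :=
      (hf.slope_le_leftDeriv_of_mem_interior (mem_univ t) (by simp) htx).trans
        (hf.leftDeriv_le_rightDeriv_of_mem_interior (by simp))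
    rw [slope_def_field, div_le_iff₀ (sub_pos.mpr htx)] at hslope
    linarith
  · simp
  · have hslope : derivWithin f (Ioi x) x ≤ slope f x t :=
      hf.rightDeriv_le_slope_of_mem_interior (by simp) (mem_univ t) hxt
    rw [slope_def_field, le_div_iff₀ (sub_pos.mpr hxt)] at hslope
    linarith

theorem PrefixSumsLE.sum_mul_comp_le {n : ℕ} {f : ℝ → ℝ} (hfm : Monotone f)
    (hfc : ConvexOn ℝ univ f) {x y z : Fin n → ℝ} (h : PrefixSumsLE x y) (hx : Antitone x)
    (hz : Antitone z) (hz0 : ∀ i, 0 ≤ z i) : ∑ i, z i * f (x i) ≤ ∑ i, z i * f (y i) := by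
  set s : Fin n → ℝ := fun i => derivWithin f (Ioi (x i)) (x i)
  have hs0 : ∀ i, 0 ≤ s i := fun i => (hfm.monotoneOn _).derivWithin_nonneg
  have hs : Antitone s := fun i j hij =>
    hfc.monotoneOn_rightDeriv (by simp) (by simp) (hx hij)
  have habel : ∑ i, (z i * s i) * x i ≤ ∑ i, (z i * s i) * y i :=
    h.sum_mul_le (fun i j hij => mul_le_mul (hz hij) (hs hij) (hs0 _) (hz0 _))
      (fun i => mul_nonneg (hz0 i) (hs0 i))
  have htangent : ∑ i, z i * (f (x i) + s i * (y i - x i)) ≤ ∑ i, z i * f (y i) :=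
    Finset.sum_le_sum fun i _ =>
      mul_le_mul_of_nonneg_left (hfc.add_rightDeriv_mul_sub_le _ _) (hz0 i)
  simp only [mul_add, mul_sub, Finset.sum_add_distrib, Finset.sum_sub_distrib] at htangent
  simp only [mul_assoc] at habel htangent
  linarith

namespace IsSymmetricGauge

variable {n : ℕ} {ρ : (Fin n → ℝ) → ℝ}

theorem nonneg (hρ : IsSymmetricGauge ρ) (v : Fin n → ℝ) : 0 ≤ ρ v := hρ.1 v

theorem map_smul (hρ : IsSymmetricGauge ρ) (c : ℝ) (v : Fin n → ℝ) : ρ (c • v) = |c| * ρ v :=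
  hρ.2.1 c v

theorem map_add_le (hρ : IsSymmetricGauge ρ) (v w : Fin n → ℝ) : ρ (v + w) ≤ ρ v + ρ w :=
  hρ.2.2.1 v w

theorem comp_perm (hρ : IsSymmetricGauge ρ) (σ : Equiv.Perm (Fin n)) (v : Fin n → ℝ) :
    ρ (v ∘ σ) = ρ v :=
  hρ.2.2.2.1 σ v

theorem map_abs (hρ : IsSymmetricGauge ρ) (v : Fin n → ℝ) : ρ (fun i => |v i|) = ρ v :=
  hρ.2.2.2.2 v

theorem map_zero (hρ : IsSymmetricGauge ρ) : ρ 0 = 0 := by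
  simpa using hρ.map_smul 0 0

theorem exists_dual (hρ : IsSymmetricGauge ρ) (u : Fin n → ℝ) :
    ∃ y : Fin n → ℝ, ρ u ≤ ∑ i, y i * u i ∧ ∀ v, ∑ i, y i * v i ≤ ρ v := by
  classical
  let φ : (Fin n → ℝ) →ₗ.[ℝ] ℝ := LinearPMap.mkSpanSingleton' u (ρ u) fun c hc => by
    rcases eq_or_ne c 0 with rfl | hc0
    · simp
    · simp [(smul_eq_zero.mp hc).resolve_left hc0, hρ.map_zero]
  obtain ⟨g, hgφ, hgρ⟩ := exists_extension_of_le_sublinear φ ρ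
    (fun c hc v => by rw [hρ.map_smul, abs_of_pos hc]) hρ.map_add_le (by
      rintro ⟨_, hv⟩
      obtain ⟨c, rfl⟩ := Submodule.mem_span_singleton.mp hv
      simp only [φ, LinearPMap.mkSpanSingleton'_apply, smul_eq_mul, RingHom.id_apply, hρ.map_smul]
      exact mul_le_mul_of_nonneg_right (le_abs_self c) (hρ.nonneg u))
  have hg : ∀ v, g v = ∑ i, g (Pi.single i 1) * v i := fun v => by
    rw [LinearMap.pi_apply_eq_sum_univ g v]
    refine Finset.sum_congr rfl fun i _ => ?_
    rw [smul_eq_mul, mul_comm]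
    congr
    ext j
    simp [Pi.single_apply, eq_comm]
  refine ⟨fun i => g (Pi.single i 1), ?_, fun v => (hg v) ▸ hgρ v⟩
  have hgu : g u = ρ u := (hgφ ⟨u, Submodule.mem_span_singleton_self u⟩).trans
    (LinearPMap.mkSpanSingleton'_apply_self _ _ _ _)
  rw [← hg, hgu]

theorem exists_antitone_dual (hρ : IsSymmetricGauge ρ) {u : Fin n → ℝ} (hu : Antitone u)
    (hu0 : ∀ i, 0 ≤ u i) :
    ∃ z : Fin n → ℝ, Antitone z ∧ (∀ i, 0 ≤ z i) ∧ ρ u ≤ ∑ i, z i * u i ∧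
      ∀ v, ∑ i, z i * |v i| ≤ ρ v := by
  obtain ⟨y, hyu, hyρ⟩ := hρ.exists_dual u
  set σ := Tuple.sort fun i => -|y i|
  have hz : Antitone fun i => |y (σ i)| := fun i j hij =>
    neg_le_neg_iff.mp (Tuple.monotone_sort (fun i => -|y i|) hij)
  refine ⟨fun i => |y (σ i)|, hz, fun i => abs_nonneg _, ?_, fun v => ?_⟩
  · calc ρ u ≤ ∑ i, y i * u i := hyu
      _ ≤ ∑ i, u i * |y (σ (σ⁻¹ i))| := Finset.sum_le_sum fun i _ => by
        rw [show σ (σ⁻¹ i) = i from σ.apply_symm_apply i, mul_comm]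
        exact mul_le_mul_of_nonneg_left (le_abs_self _) (hu0 i)
      _ ≤ ∑ i, u i * |y (σ i)| := (hu.monovary hz).sum_mul_comp_perm_le_sum_mul
      _ = ∑ i, |y (σ i)| * u i := by simp only [mul_comm]
  · -- flip the signs of `v ∘ σ⁻¹` to match those of `y`
    set w : Fin n → ℝ := fun j => if 0 ≤ y j then |v (σ⁻¹ j)| else -|v (σ⁻¹ j)|
    calc ∑ i, |y (σ i)| * |v i| = ∑ j, |y j| * |v (σ⁻¹ j)| :=
          (Equiv.sum_comp σ⁻¹ fun i => |y (σ i)| * |v i|).symm.trans (by simp)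
      _ = ∑ j, y j * w j := Finset.sum_congr rfl fun j _ => by
          by_cases hy : 0 ≤ y j
          · simp [w, hy, abs_of_nonneg hy]
          · simp [w, hy, abs_of_neg (not_le.mp hy)]
      _ ≤ ρ w := hyρ w
      _ = ρ v := by
          rw [← hρ.map_abs, ← hρ.comp_perm σ⁻¹ v, ← hρ.map_abs (v ∘ _)]
          congr 1
          ext j
          by_cases hy : 0 ≤ y j <;> simp [w, hy]

end IsSymmetricGauge

theorem StrictMono.val_le_val_apply {k n : ℕ} {g : Fin k → Fin n} (hg : StrictMono g) (j : Fin k) :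
    (j : ℕ) ≤ g j := by
  simpa using Finset.card_le_card_of_injOn g (s := Finset.Iio j) (t := Finset.Iio (g j))
    (fun i hi => by simpa using hg (by simpa using hi)) hg.injective.injOn

section KyFan

variable {n k : ℕ}

theorem powersetCard_univ_nonempty (hk : k ≤ n) :
    ((Finset.univ : Finset (Fin n)).powersetCard k).Nonempty :=
  Finset.powersetCard_nonempty.mpr (by simpa using hk)

noncomputable def kyFan (hk : k ≤ n) (v : Fin n → ℝ) : ℝ :=
  ((Finset.univ : Finset (Fin n)).powersetCard k).sup' (powersetCard_univ_nonempty hk)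
    fun s => ∑ i ∈ s, |v i|

theorem sum_abs_le_kyFan (hk : k ≤ n) (v : Fin n → ℝ) {s : Finset (Fin n)} (hs : s.card = k) :
    ∑ i ∈ s, |v i| ≤ kyFan hk v :=
  Finset.le_sup' (fun s => ∑ i ∈ s, |v i|) (Finset.mem_powersetCard.mpr ⟨s.subset_univ, hs⟩)

theorem kyFan_le_iff (hk : k ≤ n) (v : Fin n → ℝ) {a : ℝ} :
    kyFan hk v ≤ a ↔ ∀ s : Finset (Fin n), s.card = k → ∑ i ∈ s, |v i| ≤ a := by
  simp [kyFan, Finset.sup'_le_iff, Finset.mem_powersetCard]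

theorem kyFan_comp_perm_le (hk : k ≤ n) (σ : Equiv.Perm (Fin n)) (v : Fin n → ℝ) :
    kyFan hk (v ∘ σ) ≤ kyFan hk v := by
  refine (kyFan_le_iff hk _).mpr fun s hs => ?_
  have := Finset.sum_map s σ.toEmbedding fun i => |v i|
  simp only [Equiv.coe_toEmbedding] at this
  rw [Function.comp_def, ← this]
  exact sum_abs_le_kyFan hk v (by simpa using hs)

theorem isSymmetricGauge_kyFan (hk : k ≤ n) : IsSymmetricGauge (kyFan hk) := by
  refine ⟨fun v => ?_, fun c v => ?_, fun v w => ?_, fun σ v => ?_, fun v => ?_⟩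
  · obtain ⟨s, hs⟩ := powersetCard_univ_nonempty hk
    exact (Finset.sum_nonneg fun i _ => abs_nonneg (v i)).trans
      (sum_abs_le_kyFan hk v (Finset.mem_powersetCard.mp hs).2)
  · simp only [kyFan, Pi.smul_apply, smul_eq_mul, abs_mul, ← Finset.mul_sum]
    exact (Finset.apply_sup'_eq_sup'_comp _ _ fun a b => mul_max_of_nonneg a b (abs_nonneg c)).symm
  · refine (kyFan_le_iff hk _).mpr fun s hs => ?_
    calc ∑ i ∈ s, |(v + w) i| ≤ ∑ i ∈ s, |v i| + ∑ i ∈ s, |w i| := by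
          rw [← Finset.sum_add_distrib]
          exact Finset.sum_le_sum fun i _ => abs_add_le _ _
      _ ≤ kyFan hk v + kyFan hk w :=
          add_le_add (sum_abs_le_kyFan hk v hs) (sum_abs_le_kyFan hk w hs)
  · refine le_antisymm (kyFan_comp_perm_le hk σ v) ?_
    simpa [Function.comp_assoc] using kyFan_comp_perm_le hk σ⁻¹ (v ∘ σ)
  · simp [kyFan]

theorem sum_abs_castLE_le_kyFan (hk : k ≤ n) (v : Fin n → ℝ) :
    ∑ j : Fin k, |v (Fin.castLE hk j)| ≤ kyFan hk v := by
  simpa using sum_abs_le_kyFan hk v (s := Finset.univ.map (Fin.castLEEmb hk)) (by simp)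

theorem kyFan_eq_sum_castLE (hk : k ≤ n) {v : Fin n → ℝ} (hv : Antitone v) (hv0 : ∀ i, 0 ≤ v i) :
    kyFan hk v = ∑ j : Fin k, v (Fin.castLE hk j) := by
  refine le_antisymm ((kyFan_le_iff hk v).mpr fun s hs => ?_) ?_
  · rw [← s.sum_coe_sort, ← (s.orderIsoOfFin hs).sum_comp]
    refine Finset.sum_le_sum fun j _ => ?_
    rw [abs_of_nonneg (hv0 _)]
    exact hv (Fin.le_def.mpr ((s.orderEmbOfFin hs).strictMono.val_le_val_apply j))
  · simpa [abs_of_nonneg (hv0 _)] using sum_abs_castLE_le_kyFan hk v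

end KyFan

theorem abs_le_kyFan_self {n : ℕ} (v : Fin n → ℝ) (i : Fin n) : |v i| ≤ kyFan le_rfl v :=
  (Finset.single_le_sum (fun j _ => abs_nonneg (v j)) (Finset.mem_univ i)).trans
    (sum_abs_le_kyFan le_rfl v (Finset.card_fin n))

section Integral

variable {Ω : Type*} [MeasurableSpace Ω] {ν : Measure Ω} {n : ℕ}

theorem IsSymmetricGauge.apply_comp_le_integral [IsProbabilityMeasure ν] {ρ : (Fin n → ℝ) → ℝ}
    (hρ : IsSymmetricGauge ρ) {a : Fin n → ℝ} (ha : Antitone a) {x : Ω → Fin n → ℝ}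
    (hx : ∀ i, Integrable (fun τ => x τ i) ν) (hmaj : PrefixSumsLE a fun i => ∫ τ, x τ i ∂ν)
    {f : ℝ → ℝ} (hfm : Monotone f) (hfc : ConvexOn ℝ univ f) (hf0 : ∀ t, 0 ≤ f t)
    (hfx : ∀ ρ : (Fin n → ℝ) → ℝ, IsSymmetricGauge ρ →
      Integrable (fun τ => ρ fun i => f (x τ i)) ν) :
    ρ (fun i => f (a i)) ≤ ∫ τ, ρ (fun i => f (x τ i)) ∂ν := by
  have hfcont : Continuous f := continuousOn_univ.mp (hfc.continuousOn isOpen_univ)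
  have hfxi : ∀ i, Integrable (fun τ => f (x τ i)) ν := fun i =>
    (hfx _ (isSymmetricGauge_kyFan le_rfl)).mono
      (hfcont.comp_aestronglyMeasurable (hx i).aestronglyMeasurable)
      (ae_of_all _ fun τ => by simpa [abs_of_nonneg (hf0 _)] using
        (abs_le_kyFan_self (fun j => f (x τ j)) i).trans (le_abs_self _))
  obtain ⟨z, hz, hz0, hρa, hdual⟩ := hρ.exists_antitone_dual (hfm.comp_antitone ha) fun i => hf0 _
  calc ρ (fun i => f (a i)) ≤ ∑ i, z i * f (a i) := hρa
    _ ≤ ∑ i, z i * f (∫ τ, x τ i ∂ν) := hmaj.sum_mul_comp_le hfm hfc ha hz hz0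
    _ ≤ ∑ i, z i * ∫ τ, f (x τ i) ∂ν := by
        gcongr with i
        · exact hz0 i
        · exact hfc.map_integral_le hfcont.continuousOn isClosed_univ
            (ae_of_all _ fun _ => mem_univ _) (hx i) (hfxi i)
    _ = ∫ τ, ∑ i, z i * f (x τ i) ∂ν := by
        rw [integral_finsetSum _ fun i _ => (hfxi i).const_mul (z i)]
        simp only [integral_const_mul]
    _ ≤ ∫ τ, ρ (fun i => f (x τ i)) ∂ν :=
        integral_mono (integrable_finsetSum _ fun i _ => (hfxi i).const_mul (z i))
          (hfx ρ hρ) fun τ => by simpa [abs_of_nonneg (hf0 _)] using hdual fun i => f (x τ i)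

theorem integral_max_add_eq [IsProbabilityMeasure ν] {g : Ω → ℝ} (hg : Integrable g ν) (c : ℝ) :
    ∫ τ, max (g τ + c) 0 ∂ν = ∫ τ, max (g τ) (-c) ∂ν + c := by
  have hmax : (fun τ => max (g τ + c) 0) = fun τ => max (g τ) (-c) + c := by
    ext τ
    rw [← max_add_add_right, neg_add_cancel]
  have hint : Integrable (fun τ => max (g τ) (-c)) ν := hg.sup (integrable_const _)
  rw [hmax, integral_add hint (integrable_const c)]
  simp

theorem tendsto_integral_max_neg {g : Ω → ℝ} (hg : Integrable g ν) :
    Tendsto (fun c : ℝ => ∫ τ, max (g τ) (-c) ∂ν) atTop (𝓝 (∫ τ, g τ ∂ν)) := by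
  refine tendsto_integral_filter_of_dominated_convergence (fun τ => |g τ|)
    (Eventually.of_forall fun c => hg.aestronglyMeasurable.sup aestronglyMeasurable_const) ?_
    hg.abs (ae_of_all _ fun τ => tendsto_const_nhds.congr' ?_)
  · filter_upwards [eventually_ge_atTop 0] with c hc
    refine ae_of_all _ fun τ => ?_
    rw [Real.norm_eq_abs, abs_le]
    constructor
    · linarith [neg_abs_le (g τ), le_max_left (g τ) (-c)]
    · exact max_le (le_abs_self _) (by linarith [abs_nonneg (g τ)])
  · filter_upwards [eventually_ge_atTop (-g τ)] with c hc
    exact (max_eq_left (by linarith)).symm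

theorem prefixSumsLE_integral_of_gauge_le [IsProbabilityMeasure ν] {a : Fin n → ℝ}
    {x : Ω → Fin n → ℝ} (hx : ∀ τ, Antitone (x τ)) (hint : ∀ i, Integrable (fun τ => x τ i) ν)
    {c₀ : ℝ} (h : ∀ c, c₀ ≤ c → ∀ ρ : (Fin n → ℝ) → ℝ, IsSymmetricGauge ρ →
      ρ (fun j => max (a j + c) 0) ≤ ∫ τ, ρ (fun j => max (x τ j + c) 0) ∂ν) :
    PrefixSumsLE a fun i => ∫ τ, x τ i ∂ν := by
  intro k hk
  refine ge_of_tendsto (tendsto_finsetSum _ fun j _ => tendsto_integral_max_neg (hint _)) ?_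
  filter_upwards [eventually_ge_atTop c₀] with c hc
  have hgauge := h c hc _ (isSymmetricGauge_kyFan hk)
  have hA : ∑ j : Fin k, (a (Fin.castLE hk j) + c) ≤ kyFan hk fun j => max (a j + c) 0 :=
    (Finset.sum_le_sum fun j _ => (le_max_left _ _).trans (le_abs_self _)).trans
      (sum_abs_castLE_le_kyFan hk _)
  have hD : ∫ τ, kyFan hk (fun j => max (x τ j + c) 0) ∂ν =
      ∑ j : Fin k, (∫ τ, max (x τ (Fin.castLE hk j)) (-c) ∂ν + c) := by
    have hsum : ∀ τ, kyFan hk (fun j => max (x τ j + c) 0) =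
        ∑ j : Fin k, max (x τ (Fin.castLE hk j) + c) 0 := fun τ =>
      kyFan_eq_sum_castLE hk (fun i j hij => by gcongr; exact hx τ hij) fun i => le_max_right _ _
    simp_rw [hsum]
    have hmax : ∀ j, Integrable (fun τ => max (x τ j + c) 0) ν := fun j =>
      ((hint j).add (integrable_const c)).sup (integrable_const 0)
    rw [integral_finsetSum _ fun j _ => hmax _]
    exact Finset.sum_congr rfl fun j _ => integral_max_add_eq (hint _) c
  rw [Finset.sum_add_distrib] at hA hD
  linarith

end Integral

theorem eigsDesc_antitone {n : ℕ} {A : Matrix (Fin n) (Fin n) ℂ} (hA : A.IsHermitian) :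
    Antitone (eigsDesc hA) := fun _ _ hij =>
  Tuple.monotone_sort hA.eigenvalues (Fin.rev_le_rev.mpr hij)

/-- Weak majorization with integral average versus unitarily invariant norms:
(1) if `λ⃗(A) ≺_w ∫ λ⃗(D_τ) dν` and `f` is non-decreasing, convex and nonnegative,
then `‖f(A)‖_ρ ≤ ∫ ‖f(D_τ)‖_ρ dν` for every symmetric gauge function `ρ`
(where `‖f(H)‖_ρ = ρ(f ∘ λ⃗(H))` since `f` is non-decreasing);
(2) conversely, if the norm inequality holds for every symmetric gauge function and
`f(x) = max (x + c) 0` for all large `c > 0`, then `λ⃗(A) ≺_w ∫ λ⃗(D_τ) dν`. -/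
theorem weak_majorization_iff_gauge_norm_ineq {Ω : Type*} [MeasurableSpace Ω]
    (ν : Measure Ω) [IsProbabilityMeasure ν] {n : ℕ}
    {A : Matrix (Fin n) (Fin n) ℂ} (hA : A.IsHermitian)
    (D : Ω → Matrix (Fin n) (Fin n) ℂ) (hD : ∀ τ, (D τ).IsHermitian)
    (hint : ∀ j : Fin n, Integrable (fun τ => eigsDesc (hD τ) j) ν)
    (hintg : ∀ (g : ℝ → ℝ) (ρ : (Fin n → ℝ) → ℝ), IsSymmetricGauge ρ →
      Integrable (fun τ => ρ (fun j => g (eigsDesc (hD τ) j))) ν) :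
    ((∀ k : ℕ, (hk : k ≤ n) →
        ∑ j : Fin k, eigsDesc hA (Fin.castLE hk j) ≤
          ∑ j : Fin k, ∫ τ, eigsDesc (hD τ) (Fin.castLE hk j) ∂ν) →
      ∀ f : ℝ → ℝ, Monotone f → ConvexOn ℝ Set.univ f → (∀ x, 0 ≤ f x) →
        ∀ ρ : (Fin n → ℝ) → ℝ, IsSymmetricGauge ρ →
          ρ (fun j => f (eigsDesc hA j)) ≤
            ∫ τ, ρ (fun j => f (eigsDesc (hD τ) j)) ∂ν) ∧
    ((∃ c₀ : ℝ, 0 < c₀ ∧ ∀ c : ℝ, c₀ ≤ c →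
        ∀ ρ : (Fin n → ℝ) → ℝ, IsSymmetricGauge ρ →
          ρ (fun j => max (eigsDesc hA j + c) 0) ≤
            ∫ τ, ρ (fun j => max (eigsDesc (hD τ) j + c) 0) ∂ν) →
      ∀ k : ℕ, (hk : k ≤ n) →
        ∑ j : Fin k, eigsDesc hA (Fin.castLE hk j) ≤
          ∑ j : Fin k, ∫ τ, eigsDesc (hD τ) (Fin.castLE hk j) ∂ν) := by
  refine ⟨fun hmaj f hfm hfc hf0 ρ hρ => ?_, fun ⟨c₀, _, hc⟩ => ?_⟩
  · exact hρ.apply_comp_le_integral (eigsDesc_antitone hA) hint hmaj hfm hfc hf0 (hintg f)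
  · exact prefixSumsLE_integral_of_gauge_le (fun τ => eigsDesc_antitone (hD τ)) hint hc
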